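/- Let d ≥ 1 and K > 0, and let m : [0,∞) → [0,∞) be C¹ with m(0) = 0. There is a constant C = C(d,K,m) such that for all 0 < ε ≤ 1/2, all 0 < t ≤ 1, all γ ∈ ℝ and all ξ̃ ∈ ℝ^d with |ξ̃| ≤ K ε^{−1}: ∫_{|ξ| ≤ K ε^{−1}} m(ε|ξ̃|) dξ / |γ + ξ̃·ξ + i/t| ≤ C ε^{2−d} (1 + |log ε|). -/

import Mathlib

/-!
The numerator `m (ε * ‖ξ̃‖)` does not depend on `ξ` and is at most `M ε ‖ξ̃‖`, since `m` is
Lipschitz on `[0, K]` and vanishes at `0`. As `2 ‖z‖ ≥ |Re z| + |Im z|`, the kernel is at most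
`2 / (1/t + |γ + ⟪ξ̃, ξ⟫|)`. A reflection taking `ξ̃` to `‖ξ̃‖ e_i`, followed by the inclusion of
the ball in the cube `[-K/ε, K/ε]^d`, reduces the integral to `(2K/ε)^(d-1)` times the
one-dimensional integral of `1 / (1/t + |γ + ‖ξ̃‖ s|)` over `[-K/ε, K/ε]`. Splitting the range at
the zero of the affine map, this is at most `4 ‖ξ̃‖⁻¹ log (1 + 2 ‖ξ̃‖ K t / ε)`, which is
`≲ ‖ξ̃‖⁻¹ (1 + |log ε|)`, and the factors `‖ξ̃‖` cancel.
-/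

open MeasureTheory intervalIntegral Real Set
open scoped RealInnerProductSpace

lemma integral_inv_add_le_log {b p q : ℝ} (hb : 0 < b) (hp : 0 ≤ p) (hpq : p ≤ q) :
    ∫ u in p..q, (b + u)⁻¹ ≤ log (1 + (q - p) / b) := by
  rw [integral_comp_add_left (fun x => x⁻¹), integral_inv_of_pos (by linarith) (by linarith)]
  refine log_le_log (div_pos (by linarith) (by linarith)) ?_
  calc (b + q) / (b + p) = 1 + (q - p) / (b + p) := by field_simp; ring
    _ ≤ 1 + (q - p) / b := by gcongr; linarith

lemma integral_inv_add_abs_le_log_of_nonneg {b p q : ℝ} (hb : 0 < b) (hp : 0 ≤ p) (hpq : p ≤ q) :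
    ∫ u in p..q, (b + |u|)⁻¹ ≤ log (1 + (q - p) / b) := by
  rw [integral_congr (g := fun u => (b + u)⁻¹) fun u hu => ?_]
  · exact integral_inv_add_le_log hb hp hpq
  rw [uIcc_of_le hpq] at hu
  simp [abs_of_nonneg (hp.trans hu.1)]

lemma integral_inv_add_abs_le_log_of_nonpos {b p q : ℝ} (hb : 0 < b) (hq : q ≤ 0) (hpq : p ≤ q) :
    ∫ u in p..q, (b + |u|)⁻¹ ≤ log (1 + (q - p) / b) := by
  have h := integral_inv_add_abs_le_log_of_nonneg hb (neg_nonneg.2 hq) (neg_le_neg hpq)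
  simp only [← integral_comp_neg (fun u => (b + |u|)⁻¹), abs_neg, neg_sub_neg] at h
  exact h

lemma integral_inv_add_abs_le_two_mul_log {b p q : ℝ} (hb : 0 < b) (hpq : p ≤ q) :
    ∫ u in p..q, (b + |u|)⁻¹ ≤ 2 * log (1 + (q - p) / b) := by
  have hlog_mono : ∀ x, 0 ≤ x → x ≤ q - p → log (1 + x / b) ≤ log (1 + (q - p) / b) :=
    fun x hx hxq => log_le_log (by positivity) (by gcongr)
  have hlog_nonneg := hlog_mono 0 le_rfl (by linarith)
  rw [zero_div, add_zero, log_one] at hlog_nonneg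
  rcases le_total 0 p with hp | hp
  · linarith [integral_inv_add_abs_le_log_of_nonneg hb hp hpq]
  rcases le_total q 0 with hq | hq
  · linarith [integral_inv_add_abs_le_log_of_nonpos hb hq hpq]
  have hint (x y : ℝ) : IntervalIntegrable (fun u => (b + |u|)⁻¹) volume x y :=
    (continuous_const.add continuous_abs).inv₀
      (fun u => (add_pos_of_pos_of_nonneg hb (abs_nonneg u)).ne') |>.intervalIntegrable x y
  rw [← integral_add_adjacent_intervals (hint p 0) (hint 0 q)]
  linarith [integral_inv_add_abs_le_log_of_nonpos hb le_rfl hp,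
    integral_inv_add_abs_le_log_of_nonneg hb le_rfl hq,
    hlog_mono (0 - p) (by linarith) (by linarith), hlog_mono (q - 0) (by linarith) (by linarith)]

lemma setIntegral_Icc_inv_add_abs_affine_le {a b R : ℝ} (ha : 0 < a) (hb : 0 < b) (hR : 0 ≤ R)
    (γ : ℝ) :
    ∫ s in Icc (-R) R, (b + |γ + a * s|)⁻¹ ≤ a⁻¹ * (2 * log (1 + 2 * a * R / b)) := by
  rw [integral_Icc_eq_integral_Ioc, ← integral_of_le (by linarith)]
  simp only [add_comm γ]
  rw [integral_comp_mul_add (fun u => (b + |u|)⁻¹) ha.ne' γ, smul_eq_mul]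
  have h := integral_inv_add_abs_le_two_mul_log hb (by nlinarith : a * -R + γ ≤ a * R + γ)
  rw [show a * R + γ - (a * -R + γ) = 2 * a * R by ring] at h
  gcongr

lemma setIntegral_univ_pi_Icc_comp_apply {ι : Type*} [Fintype ι] {g : ℝ → ℝ} (hg : Measurable g)
    (i : ι) {R : ℝ} (hR : 0 ≤ R) :
    ∫ x in univ.pi fun _ : ι => Icc (-R) R, g (x i)
      = (2 * R) ^ (Fintype.card ι - 1) * ∫ s in Icc (-R) R, g s := by
  classical
  rw [volume_pi, Measure.restrict_pi_pi, ← integral_map (measurable_pi_apply i).aemeasurable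
    hg.aestronglyMeasurable, Measure.pi_map_eval, MeasureTheory.integral_smul_measure]
  simp only [Measure.restrict_apply_univ, Real.volume_Icc, Finset.prod_const,
    Finset.card_erase_of_mem (Finset.mem_univ i), Finset.card_univ, ENNReal.toReal_pow,
    ENNReal.toReal_ofReal (by linarith : 0 ≤ R - -R), smul_eq_mul]
  ring

lemma setIntegral_closedBall_comp_apply_le {ι : Type*} [Fintype ι] {g : ℝ → ℝ} (hg : Continuous g)
    (hg0 : ∀ s, 0 ≤ g s) (i : ι) {R : ℝ} (hR : 0 ≤ R) :
    ∫ ξ in Metric.closedBall (0 : EuclideanSpace ℝ ι) R, g (ξ i)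
      ≤ (2 * R) ^ (Fintype.card ι - 1) * ∫ s in Icc (-R) R, g s := by
  set cube : Set (ι → ℝ) := univ.pi fun _ => Icc (-R) R
  have hball : Metric.closedBall (0 : EuclideanSpace ℝ ι) R ⊆ WithLp.ofLp ⁻¹' cube := by
    intro ξ hξ j _
    rw [mem_closedBall_zero_iff] at hξ
    exact abs_le.1 ((PiLp.norm_apply_le ξ j).trans hξ)
  have hofLp := PiLp.volume_preserving_ofLp ι
  have hemb := (MeasurableEquiv.toLp 2 (ι → ℝ)).symm.measurableEmbedding
  rw [← setIntegral_univ_pi_Icc_comp_apply hg.measurable i hR,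
    ← hofLp.setIntegral_preimage_emb hemb]
  refine setIntegral_mono_set ?_ (.of_forall fun ξ => hg0 _) hball.eventuallyLE
  exact (hofLp.integrableOn_comp_preimage hemb (f := fun x => g (x i))).2 <|
    (hg.comp (continuous_apply i)).continuousOn.integrableOn_compact
      (isCompact_univ_pi fun _ => isCompact_Icc)

lemma exists_linearIsometryEquiv_inner_map_eq_norm_mul_apply {ι : Type*} [Fintype ι]
    (v : EuclideanSpace ℝ ι) (i : ι) :
    ∃ T : EuclideanSpace ℝ ι ≃ₗᵢ[ℝ] EuclideanSpace ℝ ι, ∀ ξ, ⟪v, T ξ⟫ = ‖v‖ * ξ i := by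
  classical
  rcases eq_or_ne v 0 with rfl | hv
  · exact ⟨LinearIsometryEquiv.refl ℝ _, fun ξ => by simp⟩
  set e : EuclideanSpace ℝ ι := EuclideanSpace.single i 1
  have hv' : ‖v‖ ≠ 0 := norm_ne_zero_iff.2 hv
  have hnorm : ‖e‖ = ‖‖v‖⁻¹ • v‖ := by simp [e, norm_smul, hv']
  set T := Submodule.reflection (ℝ ∙ (e - ‖v‖⁻¹ • v))ᗮ
  have hTe : T e = ‖v‖⁻¹ • v := Submodule.reflection_sub hnorm
  refine ⟨T, fun ξ => ?_⟩
  calc ⟪v, T ξ⟫ = ‖v‖ * ⟪‖v‖⁻¹ • v, T ξ⟫ := by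
        rw [real_inner_smul_left, ← mul_assoc, mul_inv_cancel₀ hv', one_mul]
    _ = ‖v‖ * ξ i := by
        rw [← hTe, LinearIsometryEquiv.inner_map_map, EuclideanSpace.inner_single_left]
        simp

lemma setIntegral_closedBall_comp_inner {ι : Type*} [Fintype ι] (g : ℝ → ℝ)
    (v : EuclideanSpace ℝ ι) (i : ι) (R : ℝ) :
    ∫ ξ in Metric.closedBall (0 : EuclideanSpace ℝ ι) R, g ⟪v, ξ⟫
      = ∫ ξ in Metric.closedBall (0 : EuclideanSpace ℝ ι) R, g (‖v‖ * ξ i) := by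
  obtain ⟨T, hT⟩ := exists_linearIsometryEquiv_inner_map_eq_norm_mul_apply v i
  have hpre : T ⁻¹' Metric.closedBall 0 R = Metric.closedBall 0 R := by ext; simp
  rw [← T.measurePreserving.setIntegral_preimage_emb T.toMeasurableEquiv.measurableEmbedding, hpre]
  simp_rw [hT]

lemma setIntegral_closedBall_inv_add_abs_inner_le {ι : Type*} [Fintype ι] [Nonempty ι]
    {v : EuclideanSpace ℝ ι} (hv : v ≠ 0) {b R : ℝ} (hb : 0 < b) (hR : 0 ≤ R) (γ : ℝ) :
    ∫ ξ in Metric.closedBall (0 : EuclideanSpace ℝ ι) R, (b + |γ + ⟪v, ξ⟫|)⁻¹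
      ≤ (2 * R) ^ (Fintype.card ι - 1) * (‖v‖⁻¹ * (2 * log (1 + 2 * ‖v‖ * R / b))) := by
  let i : ι := Classical.arbitrary ι
  rw [setIntegral_closedBall_comp_inner (fun s => (b + |γ + s|)⁻¹) v i R]
  have hcont : Continuous fun s : ℝ => (b + |γ + ‖v‖ * s|)⁻¹ := by
    refine (continuous_const.add (by fun_prop)).inv₀ fun s => ?_
    exact (add_pos_of_pos_of_nonneg hb (abs_nonneg _)).ne'
  refine (setIntegral_closedBall_comp_apply_le hcont (fun s => by positivity) i hR).trans ?_
  gcongr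
  exact setIntegral_Icc_inv_add_abs_affine_le (norm_pos_iff.2 hv) hb hR γ

lemma inv_norm_ofReal_add_I_div_le {t : ℝ} (ht : 0 < t) (x : ℝ) :
    ‖(x : ℂ) + Complex.I / t‖⁻¹ ≤ 2 * (t⁻¹ + |x|)⁻¹ := by
  set z : ℂ := x + Complex.I / t
  have hre : |z.re| = |x| := by simp [z]
  have him : |z.im| = t⁻¹ := by simp [z, abs_of_pos ht]
  rw [← div_eq_mul_inv, ← inv_div]
  exact inv_anti₀ (by positivity) (by
    linarith [Complex.abs_re_le_norm z, Complex.abs_im_le_norm z])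

lemma setIntegral_closedBall_inv_norm_le {ι : Type*} [Fintype ι] [Nonempty ι]
    {v : EuclideanSpace ℝ ι} (hv : v ≠ 0) {t R : ℝ} (ht : 0 < t) (hR : 0 ≤ R) (γ : ℝ) :
    ∫ ξ in Metric.closedBall (0 : EuclideanSpace ℝ ι) R,
        ‖(γ : ℂ) + ((⟪v, ξ⟫ : ℝ) : ℂ) + Complex.I / t‖⁻¹
      ≤ 4 * (2 * R) ^ (Fintype.card ι - 1) * ‖v‖⁻¹ * log (1 + 2 * ‖v‖ * R * t) := by
  have hint : IntegrableOn (fun ξ : EuclideanSpace ℝ ι => 2 * (t⁻¹ + |γ + ⟪v, ξ⟫|)⁻¹)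
      (Metric.closedBall 0 R) := by
    refine ContinuousOn.integrableOn_compact (isCompact_closedBall 0 R) (Continuous.continuousOn ?_)
    refine continuous_const.mul ((continuous_const.add (by fun_prop)).inv₀ fun ξ => ?_)
    exact (add_pos_of_pos_of_nonneg (inv_pos.2 ht) (abs_nonneg _)).ne'
  calc _ ≤ ∫ ξ in Metric.closedBall (0 : EuclideanSpace ℝ ι) R, 2 * (t⁻¹ + |γ + ⟪v, ξ⟫|)⁻¹ := by
        refine integral_mono_of_nonneg (.of_forall fun ξ => by positivity) hint
          (.of_forall fun ξ => ?_)
        simpa using inv_norm_ofReal_add_I_div_le ht (γ + ⟪v, ξ⟫)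
    _ = 2 * ∫ ξ in Metric.closedBall (0 : EuclideanSpace ℝ ι) R, (t⁻¹ + |γ + ⟪v, ξ⟫|)⁻¹ :=
        integral_const_mul _ _
    _ ≤ 2 * ((2 * R) ^ (Fintype.card ι - 1) * (‖v‖⁻¹ * (2 * log (1 + 2 * ‖v‖ * R / t⁻¹)))) := by
        gcongr
        exact setIntegral_closedBall_inv_add_abs_inner_le hv (inv_pos.2 ht) hR γ
    _ = _ := by rw [div_inv_eq_mul]; ring

lemma exists_abs_le_mul_of_contDiffOn_Ici {m : ℝ → ℝ} (hm : ContDiffOn ℝ 1 m (Ici 0))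
    (hm0 : m 0 = 0) (K : ℝ) : ∃ M : NNReal, ∀ x ∈ Icc 0 K, |m x| ≤ M * x := by
  obtain ⟨M, hM⟩ := (hm.mono Icc_subset_Ici_self).exists_lipschitzOnWith one_ne_zero
    (convex_Icc 0 K) isCompact_Icc
  refine ⟨M, fun x hx => ?_⟩
  have h := hM.dist_le_mul x hx 0 (left_mem_Icc.2 (hx.1.trans hx.2))
  rwa [Real.dist_eq, Real.dist_eq, hm0, sub_zero, sub_zero, abs_of_nonneg hx.1] at h

lemma log_one_add_le_of_le_div_sq {ε c x : ℝ} (hε : 0 < ε) (hε1 : ε ≤ 1) (hc : 0 ≤ c)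
    (hx : 0 ≤ x) (hxc : x ≤ c / ε ^ 2) :
    log (1 + x) ≤ (log (1 + c) + 2) * (1 + |log ε|) := by
  have hε2 : 1 ≤ 1 / ε ^ 2 := (one_le_div (by positivity)).2 (pow_le_one₀ hε.le hε1)
  calc log (1 + x) ≤ log ((1 + c) / ε ^ 2) := by
        refine log_le_log (by positivity) ?_
        rw [add_div]
        linarith
    _ = log (1 + c) + 2 * |log ε| := by
        rw [log_div (by positivity) (by positivity), log_pow, abs_of_nonpos (log_nonpos hε.le hε1)]
        push_cast
        ring
    _ ≤ (log (1 + c) + 2) * (1 + |log ε|) := by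
        nlinarith [log_nonneg (by linarith : (1 : ℝ) ≤ 1 + c), abs_nonneg (log ε)]

lemma mul_div_pow_pred_eq_mul_rpow {ε : ℝ} (hε : 0 < ε) (c : ℝ) {n : ℕ} (hn : 1 ≤ n) :
    ε * (c / ε) ^ (n - 1) = c ^ (n - 1) * ε ^ ((2 : ℝ) - n) := by
  rw [show (2 : ℝ) - n = 1 - ((n - 1 : ℕ) : ℝ) by push_cast [Nat.cast_sub hn]; ring,
    rpow_sub hε, rpow_one, rpow_natCast, div_pow]
  field_simp

lemma setIntegral_closedBall_inv_norm_le_log {ι : Type*} [Fintype ι] [Nonempty ι]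
    {v : EuclideanSpace ℝ ι} (hv : v ≠ 0) {K ε t : ℝ} (hK : 0 ≤ K) (hε : 0 < ε) (hε1 : ε ≤ 1)
    (ht : 0 < t) (ht1 : t ≤ 1) (hvK : ‖v‖ ≤ K / ε) (γ : ℝ) :
    ∫ ξ in Metric.closedBall (0 : EuclideanSpace ℝ ι) (K / ε),
        ‖(γ : ℂ) + ((⟪v, ξ⟫ : ℝ) : ℂ) + Complex.I / t‖⁻¹
      ≤ 4 * (2 * (K / ε)) ^ (Fintype.card ι - 1) * ‖v‖⁻¹
          * ((log (1 + 2 * K ^ 2) + 2) * (1 + |log ε|)) := by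
  refine (setIntegral_closedBall_inv_norm_le hv ht (by positivity) γ).trans ?_
  refine mul_le_mul_of_nonneg_left
    (log_one_add_le_of_le_div_sq hε hε1 (by positivity) (by positivity) ?_) (by positivity)
  calc 2 * ‖v‖ * (K / ε) * t ≤ 2 * (K / ε) * (K / ε) * 1 := by gcongr
    _ = 2 * K ^ 2 / ε ^ 2 := by ring

theorem stmt9_general (d : ℕ) (hd : 1 ≤ d) (K : ℝ) (hK : 0 < K) (m : ℝ → ℝ)
    (hm : ContDiffOn ℝ 1 m (Set.Ici 0)) (hm0 : m 0 = 0) :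
    ∃ C : ℝ, ∀ (ε t γ : ℝ) (ξT : EuclideanSpace ℝ (Fin d)),
      0 < ε → ε ≤ 1 / 2 → 0 < t → t ≤ 1 → ‖ξT‖ ≤ K / ε →
      (∫ ξ in Metric.closedBall (0 : EuclideanSpace ℝ (Fin d)) (K / ε),
          m (ε * ‖ξT‖) / ‖(γ : ℂ) + ((inner ℝ ξT ξ : ℝ) : ℂ) + Complex.I / (t : ℂ)‖)
        ≤ C * ε ^ ((2 : ℝ) - d) * (1 + |Real.log ε|) := by
  have : Nonempty (Fin d) := ⟨⟨0, hd⟩⟩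
  obtain ⟨M, hM⟩ := exists_abs_le_mul_of_contDiffOn_Ici hm hm0 K
  set C₀ := log (1 + 2 * K ^ 2) + 2
  have hC₀ : 0 ≤ C₀ := add_nonneg (log_nonneg (by nlinarith)) zero_le_two
  refine ⟨4 * M * (2 * K) ^ (d - 1) * C₀, fun ε t γ ξT hε hε2 ht ht1 hξT => ?_⟩
  rcases eq_or_ne ξT 0 with rfl | hξT0
  · simp only [norm_zero, mul_zero, hm0, zero_div, MeasureTheory.integral_zero]
    positivity
  have hξT_pos : 0 < ‖ξT‖ := norm_pos_iff.2 hξT0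
  have hm_le : |m (ε * ‖ξT‖)| ≤ M * (ε * ‖ξT‖) := hM _ ⟨by positivity, (le_div_iff₀' hε).1 hξT⟩
  have hI := setIntegral_closedBall_inv_norm_le_log hξT0 hK.le hε (by linarith) ht ht1 hξT γ
  rw [Fintype.card_fin] at hI
  calc _ = m (ε * ‖ξT‖) * ∫ ξ in Metric.closedBall (0 : EuclideanSpace ℝ (Fin d)) (K / ε),
        ‖(γ : ℂ) + ((⟪ξT, ξ⟫ : ℝ) : ℂ) + Complex.I / t‖⁻¹ := by
        simp_rw [div_eq_mul_inv]
        exact integral_const_mul _ _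
    _ ≤ M * (ε * ‖ξT‖) * (4 * (2 * (K / ε)) ^ (d - 1) * ‖ξT‖⁻¹ * (C₀ * (1 + |log ε|))) :=
        mul_le_mul ((le_abs_self _).trans hm_le) hI
          (setIntegral_nonneg measurableSet_closedBall fun ξ _ => by positivity)
          ((abs_nonneg _).trans hm_le)
    _ = 4 * M * (2 * K) ^ (d - 1) * C₀ * ε ^ ((2 : ℝ) - d) * (1 + |log ε|) := by
        rw [← mul_div_assoc]
        linear_combination (4 * M * C₀ * (1 + |log ε|)) * mul_div_pow_pred_eq_mul_rpow hε (2 * K) hd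
          + (4 * M * ε * (2 * K / ε) ^ (d - 1) * C₀ * (1 + |log ε|)) * mul_inv_cancel₀ hξT_pos.ne'

/-- Degree one linear vertex estimate with a vanishing multiplier `m(0) = 0`:
`∫_{|ξ| ≤ K/ε} m(ε|ξ̃|) dξ / |γ + ξ̃·ξ + i/t| ≲ ε^{2-d} (1 + |log ε|)`. -/
theorem stmt9 (d : ℕ) (hd : 1 ≤ d) (K : ℝ) (hK : 0 < K) (m : ℝ → ℝ)
    (hm : ContDiffOn ℝ 1 m (Set.Ici 0)) (hm0 : m 0 = 0)
    (hmnonneg : ∀ x : ℝ, 0 ≤ x → 0 ≤ m x) :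
    ∃ C : ℝ, ∀ (ε t γ : ℝ) (ξT : EuclideanSpace ℝ (Fin d)),
      0 < ε → ε ≤ 1 / 2 → 0 < t → t ≤ 1 → ‖ξT‖ ≤ K / ε →
      (∫ ξ in Metric.closedBall (0 : EuclideanSpace ℝ (Fin d)) (K / ε),
          m (ε * ‖ξT‖) / ‖(γ : ℂ) + ((inner ℝ ξT ξ : ℝ) : ℂ) + Complex.I / (t : ℂ)‖)
        ≤ C * ε ^ ((2 : ℝ) - d) * (1 + |Real.log ε|) :=
  stmt9_general d hd K hK m hm hm0
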